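/- arXiv:1711.02195 — 6 statements merged into one kernel-verified Lean document; each statement's English description precedes it below -/
import Mathlib

section
/- Rounding guarantee (edge cut probability, same dominant label): for the rounding algorithm R with ε = 1/(10k), θ = 6/(5k), if vertices u, v have the same dominant label j, then the probability that u and v receive different labels is at most (5/3)·d(u,v), where d(u,v) = (1/2)‖ū − v̄‖₁. -/
open Finset MeasureTheory

variable {L : Type*}

/-- `x` is a probability vector over the labels `L`. -/
def IsProbVec [Fintype L] (x : L → ℝ) : Prop :=
  (∀ i, 0 ≤ x i) ∧ ∑ i, x i = 1

/-- Half the ℓ₁ distance between two label vectors. -/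
noncomputable def dL1 [Fintype L] (x y : L → ℝ) : ℝ :=
  (1 / 2) * ∑ i, |x i - y i|

/-- Probability of an event under the randomness of the rounding algorithm:
`r` uniform in `(0, θ)` and a label `i` uniform in `L`, independently. -/
noncomputable def Pr [Fintype L] (θ : ℝ) (ev : ℝ → L → Prop) : ℝ :=
  (1 / (Fintype.card L : ℝ)) *
    ∑ i, (volume {r : ℝ | r ∈ Set.Ioo 0 θ ∧ ev r i}).toReal / θ

/-- The label assigned to a vertex with LP vector `x` and dominant label `j`
by the rounding algorithm on randomness `(r, i)`. -/
noncomputable def assign (x : L → ℝ) (j : L) (r : ℝ) (i : L) : L :=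
  if x i < r then j else i

/-! The two vertices can only be separated in a round `(r, i)` in which `r` falls between `x i`
and `y i`, an event of length at most `|x i - y i|` out of `θ`. Averaging over the `k` labels
gives `Pr ≤ (2 / (k θ)) · d(x, y)`, and `2 / (k θ) = 5 / 3` for `θ = 6 / (5 k)`. -/

lemma assign_ne_subset_uIoc (x y : L → ℝ) (j i : L) :
    {r : ℝ | assign x j r i ≠ assign y j r i} ⊆ Set.uIoc (x i) (y i) := by
  intro r hr
  simp only [Set.mem_ofPred_eq, assign] at hr
  rw [Set.mem_uIoc]
  split_ifs at hr with hxr hyr hyr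
  · exact absurd rfl hr
  · exact Or.inl ⟨hxr, not_lt.mp hyr⟩
  · exact Or.inr ⟨hyr, not_lt.mp hxr⟩
  · exact absurd rfl hr

lemma volume_assign_ne_le (x y : L → ℝ) (j i : L) (θ : ℝ) :
    (volume {r : ℝ | r ∈ Set.Ioo 0 θ ∧ assign x j r i ≠ assign y j r i}).toReal
      ≤ |x i - y i| := by
  have hsub : {r : ℝ | r ∈ Set.Ioo 0 θ ∧ assign x j r i ≠ assign y j r i}
      ⊆ Set.uIoc (x i) (y i) := fun r hr => assign_ne_subset_uIoc x y j i hr.2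
  calc _ ≤ (volume (Set.uIoc (x i) (y i))).toReal :=
        ENNReal.toReal_mono (by simp [Real.volume_uIoc]) (measure_mono hsub)
    _ = |x i - y i| := by
        rw [Real.volume_uIoc, ENNReal.toReal_ofReal (abs_nonneg _), abs_sub_comm]

lemma Pr_le_of_volume_le [Fintype L] {θ : ℝ} (hθ : 0 ≤ θ) {ev : ℝ → L → Prop} {f : L → ℝ}
    (h : ∀ i, (volume {r : ℝ | r ∈ Set.Ioo 0 θ ∧ ev r i}).toReal ≤ f i) :
    Pr θ ev ≤ (1 / (Fintype.card L : ℝ)) * ∑ i, f i / θ := by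
  unfold Pr
  gcongr with i
  exact h i

lemma Pr_assign_ne_le [Fintype L] (x y : L → ℝ) (j : L) {θ : ℝ} (hθ : 0 ≤ θ) :
    Pr θ (fun r i => assign x j r i ≠ assign y j r i)
      ≤ 2 / ((Fintype.card L : ℝ) * θ) * dL1 x y := by
  refine (Pr_le_of_volume_le hθ fun i => volume_assign_ne_le x y j i θ).trans_eq ?_
  rw [dL1, ← Finset.sum_div]
  ring

theorem rounding_cut_prob_same_dominant_general [Fintype L]
    (x y : L → ℝ) (j : L) :
    Pr (6 / (5 * (Fintype.card L : ℝ)))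
        (fun r i' => assign x j r i' ≠ assign y j r i')
      ≤ 5 / 3 * dL1 x y := by
  have hk : (Fintype.card L : ℝ) ≠ 0 := by
    have := Fintype.card_pos_iff.2 ⟨j⟩
    positivity
  calc _ ≤ 2 / ((Fintype.card L : ℝ) * (6 / (5 * (Fintype.card L : ℝ)))) * dL1 x y :=
        Pr_assign_ne_le x y j (by positivity)
    _ = 5 / 3 * dL1 x y := by
        field_simp
        ring

/-- Rounding guarantee (same dominant label): if `u, v` share dominant label `j`,
the probability they receive different labels is at most `(5/3)·d(u,v)`. -/
theorem rounding_cut_prob_same_dominant [Fintype L] [DecidableEq L]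
    (x y : L → ℝ) (hx : IsProbVec x) (hy : IsProbVec y) (j : L)
    (hxj : x j ≥ 1 - 1 / (10 * (Fintype.card L : ℝ)))
    (hyj : y j ≥ 1 - 1 / (10 * (Fintype.card L : ℝ))) :
    Pr (6 / (5 * (Fintype.card L : ℝ)))
        (fun r i' => assign x j r i' ≠ assign y j r i')
      ≤ 5 / 3 * dL1 x y :=
  rounding_cut_prob_same_dominant_general x y j
end

section
/- Rounding guarantee (edge non-cut probability, distinct dominant labels): if u, v have distinct dominant labels j(u) ≠ j(v), then under the rounding algorithm R, the probability that u and v receive the same label is at least (5/6)·(1 − d(u,v)). -/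
open Finset MeasureTheory

variable {L : Type*}

/- With `ε = 1/(10k)` and `θ = 6/(5k)`, distinct dominant labels force `min (x i) (y i) ≤ ε < θ`
for every label `i`. Both endpoints keep label `i` whenever `r ≤ min (x i) (y i)`, so the
probability of agreement is at least `(1/k) ∑ᵢ min (x i) (y i) / θ = (1/(kθ)) (1 - d(x,y))`,
and `1/(kθ) = 5/6`. -/

theorem IsProbVec.le_one_sub_of_ne [Fintype L] {x : L → ℝ} (hx : IsProbVec x) {i j : L}
    (hij : i ≠ j) : x i ≤ 1 - x j := by
  classical
  have hpair : x i + x j ≤ ∑ l, x l := by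
    rw [← Finset.sum_pair hij]
    exact Finset.sum_le_sum_of_subset_of_nonneg (Finset.subset_univ _) fun l _ _ => hx.1 l
  linarith [hx.2]

theorem sum_min_eq_one_sub_dL1 [Fintype L] {x y : L → ℝ} (hx : IsProbVec x) (hy : IsProbVec y) :
    ∑ i, min (x i) (y i) = 1 - dL1 x y := by
  have hmin : ∀ i, min (x i) (y i) = (x i + y i - |x i - y i|) / 2 := fun i => by
    linarith [min_add_max (x i) (y i), max_sub_min_eq_abs' (x i) (y i)]
  simp only [hmin, ← Finset.sum_div, Finset.sum_sub_distrib, Finset.sum_add_distrib, hx.2, hy.2,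
    dL1]
  ring

theorem min_le_of_ne_dominant [Fintype L] {x y : L → ℝ} (hx : IsProbVec x) (hy : IsProbVec y)
    {ju jv : L} (hj : ju ≠ jv) {ε : ℝ} (hxj : 1 - ε ≤ x ju) (hyj : 1 - ε ≤ y jv) (i : L) :
    min (x i) (y i) ≤ ε := by
  by_cases hi : i = ju
  · subst hi
    linarith [min_le_right (x i) (y i), hy.le_one_sub_of_ne hj]
  · linarith [min_le_left (x i) (y i), hx.le_one_sub_of_ne hi]

theorem assign_eq_assign_of_le {x y : L → ℝ} (ju jv : L) {r : ℝ} {i : L} (hx : r ≤ x i)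
    (hy : r ≤ y i) : assign x ju r i = assign y jv r i := by
  simp only [assign, if_neg (not_lt.2 hx), if_neg (not_lt.2 hy)]

theorem le_volume_toReal_of_Ioc_subset {S : Set ℝ} (hS : volume S ≠ ⊤) {a : ℝ}
    (ha : Set.Ioc 0 a ⊆ S) : a ≤ (volume S).toReal :=
  calc a ≤ max a 0 := le_max_left a 0
    _ = (volume (Set.Ioc 0 a)).toReal := by rw [Real.volume_Ioc, sub_zero, ENNReal.toReal_ofReal']
    _ ≤ (volume S).toReal := ENNReal.toReal_mono hS (measure_mono ha)

theorem le_Pr_of_Ioc_subset [Fintype L] {θ : ℝ} (hθ : 0 ≤ θ) {ev : ℝ → L → Prop} (m : L → ℝ)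
    (hm : ∀ i, Set.Ioc 0 (m i) ⊆ {r | r ∈ Set.Ioo 0 θ ∧ ev r i}) :
    1 / (Fintype.card L : ℝ) * ∑ i, m i / θ ≤ Pr θ ev := by
  unfold Pr
  gcongr with i
  have hfin : volume {r | r ∈ Set.Ioo 0 θ ∧ ev r i} ≠ ⊤ :=
    (measure_mono fun r hr => hr.1).trans_lt measure_Ioo_lt_top |>.ne
  exact le_volume_toReal_of_Ioc_subset hfin (hm i)

theorem rounding_uncut_prob_distinct_dominant_general [Fintype L]
    (x y : L → ℝ) (hx : IsProbVec x) (hy : IsProbVec y) (ju jv : L) (hj : ju ≠ jv)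
    (hxj : x ju ≥ 1 - 1 / (10 * (Fintype.card L : ℝ)))
    (hyj : y jv ≥ 1 - 1 / (10 * (Fintype.card L : ℝ))) :
    Pr (6 / (5 * (Fintype.card L : ℝ)))
        (fun r i' => assign x ju r i' = assign y jv r i')
      ≥ 5 / 6 * (1 - dL1 x y) := by
  set k : ℝ := (Fintype.card L : ℝ)
  have hk : 0 < k := Nat.cast_pos.2 (Fintype.card_pos_iff.2 ⟨ju⟩)
  have hεθ : 1 / (10 * k) < 6 / (5 * k) := by
    rw [div_lt_div_iff₀ (by positivity) (by positivity)]
    linarith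
  have hagree : ∀ i, Set.Ioc 0 (min (x i) (y i)) ⊆
      {r | r ∈ Set.Ioo 0 (6 / (5 * k)) ∧ assign x ju r i = assign y jv r i} := by
    intro i r ⟨hr0, hrm⟩
    have hmε := min_le_of_ne_dominant hx hy hj hxj hyj i
    exact ⟨⟨hr0, by linarith⟩,
      assign_eq_assign_of_le ju jv (hrm.trans (min_le_left _ _)) (hrm.trans (min_le_right _ _))⟩
  calc 5 / 6 * (1 - dL1 x y) = 1 / k * ∑ i, min (x i) (y i) / (6 / (5 * k)) := by
        rw [← Finset.sum_div, sum_min_eq_one_sub_dL1 hx hy]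
        field_simp
    _ ≤ _ := le_Pr_of_Ioc_subset (by positivity) _ hagree

/-- Rounding guarantee (distinct dominant labels): if `u, v` have distinct
dominant labels, the probability they receive the same label is at least
`(5/6)·(1 − d(u,v))`. -/
theorem rounding_uncut_prob_distinct_dominant [Fintype L] [DecidableEq L]
    (x y : L → ℝ) (hx : IsProbVec x) (hy : IsProbVec y) (ju jv : L) (hj : ju ≠ jv)
    (hxj : x ju ≥ 1 - 1 / (10 * (Fintype.card L : ℝ)))
    (hyj : y jv ≥ 1 - 1 / (10 * (Fintype.card L : ℝ))) :
    Pr (6 / (5 * (Fintype.card L : ℝ)))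
        (fun r i' => assign x ju r i' = assign y jv r i')
      ≥ 5 / 6 * (1 - dL1 x y) :=
  rounding_uncut_prob_distinct_dominant_general x y hx hy ju jv hj hxj hyj
end

section
/- Sufficiency of the adversarial perturbation: for the adversarial (β,γ)-perturbation w' (defined by w'(u,v) = w(u,v)/β on edges not cut by g, and w'(u,v) = γ·w(u,v) on edges cut by g), any labeling h and any (β,γ)-perturbation w* satisfy Q*(g) − Q*(h) ≤ Q'(g) − Q'(h). Consequently, if Q*(h) ≤ Q*(g) for some (β,γ)-perturbation w*, then Q'(h) ≤ Q'(g). -/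
open Finset

variable {V L : Type*}

/-- `w'` is a `(β,γ)`-perturbation of `w` on edge set `E`. -/
def IsPerturbation (E : Finset (V × V)) (β γ : ℝ) (w w' : V × V → ℝ) : Prop :=
  ∀ e ∈ E, w e / β ≤ w' e ∧ w' e ≤ γ * w e

/-- The Uniform Metric Labeling objective. -/
def Q [Fintype V] [DecidableEq L] (E : Finset (V × V)) (c : V → L → ℝ)
    (w : V × V → ℝ) (g : V → L) : ℝ :=
  ∑ u, c u (g u) + ∑ e ∈ E.filter (fun e => g e.1 ≠ g e.2), w e

/-- `(β,γ)`-stability: `g` is the unique optimum under every `(β,γ)`-perturbation. -/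
def IsStable [Fintype V] [DecidableEq L] (E : Finset (V × V)) (c : V → L → ℝ)
    (w : V × V → ℝ) (β γ : ℝ) (g : V → L) : Prop :=
  ∀ w', IsPerturbation E β γ w w' → ∀ h : V → L, h ≠ g → Q E c w' g < Q E c w' h

/-- `(β,γ,S)`-weak stability. -/
def IsWeaklyStable [Fintype V] [DecidableEq L] (E : Finset (V × V)) (c : V → L → ℝ)
    (w : V × V → ℝ) (β γ : ℝ) (S : Set V) (g : V → L) : Prop :=
  ∀ w', IsPerturbation E β γ w w' →
    ∀ h : V → L, (∃ u ∈ S, h u ≠ g u) → Q E c w' g < Q E c w' h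

/-- The adversarial `(β,γ)`-perturbation with respect to labeling `g`:
weight `γ·w` on edges cut by `g`, weight `w/β` on uncut edges. -/
noncomputable def advPerturb [DecidableEq L] (β γ : ℝ) (w : V × V → ℝ) (g : V → L) : V × V → ℝ :=
  fun e => if g e.1 ≠ g e.2 then γ * w e else w e / β

def cutWeightDiff [DecidableEq L] (w : V × V → ℝ) (g h : V → L) (e : V × V) : ℝ :=
  (if g e.1 ≠ g e.2 then w e else 0) - (if h e.1 ≠ h e.2 then w e else 0)

section

variable [Fintype V] [DecidableEq L] (E : Finset (V × V)) (c : V → L → ℝ)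

theorem Q_sub_Q (w : V × V → ℝ) (g h : V → L) :
    Q E c w g - Q E c w h =
      (∑ u, c u (g u) - ∑ u, c u (h u)) + ∑ e ∈ E, cutWeightDiff w g h e := by
  simp only [Q, cutWeightDiff, sum_sub_distrib, sum_filter]
  ring

theorem Q_sub_Q_le_of_cutWeightDiff_le {w w' : V × V → ℝ} {g h : V → L}
    (hle : ∀ e ∈ E, cutWeightDiff w g h e ≤ cutWeightDiff w' g h e) :
    Q E c w g - Q E c w h ≤ Q E c w' g - Q E c w' h := by
  rw [Q_sub_Q, Q_sub_Q]
  gcongr with e he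
  exact hle e he

end

/-- Only edges cut by exactly one of `g`, `h` contribute, and on those the adversarial
weight sits at the bound of the perturbation interval that favours `g`. -/
theorem cutWeightDiff_le_advPerturb [DecidableEq L] {β γ : ℝ} {w w' : V × V → ℝ}
    (g h : V → L) {e : V × V} (hbounds : w e / β ≤ w' e ∧ w' e ≤ γ * w e) :
    cutWeightDiff w' g h e ≤ cutWeightDiff (advPerturb β γ w g) g h e := by
  obtain ⟨hlower, hupper⟩ := hbounds
  unfold cutWeightDiff advPerturb
  split_ifs <;> linarith

theorem advPerturb_sufficient_general [Fintype V] [DecidableEq L]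
    (E : Finset (V × V)) (c : V → L → ℝ) (w : V × V → ℝ)
    (β γ : ℝ)
    (g h : V → L) (w' : V × V → ℝ) (hpert : IsPerturbation E β γ w w') :
    Q E c w' g - Q E c w' h ≤ Q E c (advPerturb β γ w g) g - Q E c (advPerturb β γ w g) h ∧
    (Q E c w' h ≤ Q E c w' g → Q E c (advPerturb β γ w g) h ≤ Q E c (advPerturb β γ w g) g) := by
  have key := Q_sub_Q_le_of_cutWeightDiff_le E c fun e he =>
    cutWeightDiff_le_advPerturb g h (hpert e he)
  exact ⟨key, fun hle => by linarith⟩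

/-- Sufficiency of the adversarial perturbation: it maximizes `Q(g) − Q(h)`
among all `(β,γ)`-perturbations; hence any stability violation in some
perturbation is also a violation in the adversarial one. -/
theorem advPerturb_sufficient [Fintype V] [DecidableEq L]
    (E : Finset (V × V)) (c : V → L → ℝ) (w : V × V → ℝ)
    (hc : ∀ u i, 0 ≤ c u i) (hw : ∀ e ∈ E, 0 ≤ w e)
    (β γ : ℝ) (hβ : 1 ≤ β) (hγ : 1 ≤ γ)
    (g h : V → L) (w' : V × V → ℝ) (hpert : IsPerturbation E β γ w w') :
    Q E c w' g - Q E c w' h ≤ Q E c (advPerturb β γ w g) g - Q E c (advPerturb β γ w g) h ∧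
    (Q E c w' h ≤ Q E c w' g → Q E c (advPerturb β γ w g) h ≤ Q E c (advPerturb β γ w g) g) :=
  advPerturb_sufficient_general E c w β γ g h w' hpert
end

section
/- An instance is (β,γ)-stable if and only if its optimal solution g is the unique optimum under the single adversarial perturbation w' given by w'(u,v) = w(u,v)/β for (u,v) ∉ E_g and w'(u,v) = γ·w(u,v) for (u,v) ∈ E_g. -/
open Finset

variable {V L : Type*}

theorem isPerturbation_advPerturb [DecidableEq L] {E : Finset (V × V)} {w : V × V → ℝ}
    (hw : ∀ e ∈ E, 0 ≤ w e) {β γ : ℝ} (hβ : 1 ≤ β) (hγ : 1 ≤ γ) (g : V → L) :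
    IsPerturbation E β γ w (advPerturb β γ w g) := by
  intro e he
  have hβw : w e / β ≤ w e := div_le_self (hw e he) hβ
  have hγw : w e ≤ γ * w e := le_mul_of_one_le_left (hw e he) hγ
  unfold advPerturb
  split_ifs <;> constructor <;> linarith

/-- `advPerturb β γ w g` is the heaviest admissible weight on the edges only `g` cuts and the
lightest on those only `h` cuts; edges cut by both or neither cancel. -/
theorem Q_sub_le_Q_advPerturb_sub [Fintype V] [DecidableEq L] {E : Finset (V × V)}
    (c : V → L → ℝ) {w w' : V × V → ℝ} {β γ : ℝ} (hw' : IsPerturbation E β γ w w')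
    (g h : V → L) :
    Q E c w' g - Q E c w' h ≤ Q E c (advPerturb β γ w g) g - Q E c (advPerturb β γ w g) h := by
  have hedge : ∀ e ∈ E,
      ((if g e.1 ≠ g e.2 then w' e else 0) - if h e.1 ≠ h e.2 then w' e else 0) ≤
        (if g e.1 ≠ g e.2 then advPerturb β γ w g e else 0) -
          if h e.1 ≠ h e.2 then advPerturb β γ w g e else 0 := by
    intro e he
    obtain ⟨hlow, hhigh⟩ := hw' e he
    unfold advPerturb
    split_ifs <;> linarith
  have hsum := sum_le_sum hedge
  simp only [Q, sum_filter, sum_sub_distrib] at hsum ⊢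
  linarith

theorem isStable_iff_advPerturb_general [Fintype V] [DecidableEq L]
    (E : Finset (V × V)) (c : V → L → ℝ) (w : V × V → ℝ)
    (hw : ∀ e ∈ E, 0 ≤ w e)
    (β γ : ℝ) (hβ : 1 ≤ β) (hγ : 1 ≤ γ) (g : V → L) :
    IsStable E c w β γ g ↔
      ∀ h : V → L, h ≠ g →
        Q E c (advPerturb β γ w g) g < Q E c (advPerturb β γ w g) h := by
  refine ⟨fun hs => hs _ (isPerturbation_advPerturb hw hβ hγ g), fun hadv w' hw' h hne => ?_⟩
  have hgap := Q_sub_le_Q_advPerturb_sub c hw' g h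
  linarith [hadv h hne]

/-- An instance is `(β,γ)`-stable iff its optimal solution `g` is the unique
optimum under the single adversarial perturbation. -/
theorem isStable_iff_advPerturb [Fintype V] [DecidableEq L]
    (E : Finset (V × V)) (c : V → L → ℝ) (w : V × V → ℝ)
    (hc : ∀ u i, 0 ≤ c u i) (hw : ∀ e ∈ E, 0 ≤ w e)
    (β γ : ℝ) (hβ : 1 ≤ β) (hγ : 1 ≤ γ) (g : V → L) :
    IsStable E c w β γ g ↔
      ∀ h : V → L, h ≠ g →
        Q E c (advPerturb β γ w g) g < Q E c (advPerturb β γ w g) h :=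
  isStable_iff_advPerturb_general E c w hw β γ hβ hγ g
end

section
/- The four-node path instance u–v–w–x with edge weights w(u,v)=4, w(v,w)=3, w(w,x)=3, labels {1,2,3}, and node costs c(u,1)=2, c(v,3)=100, c(w,2)=100, c(x,1)=100 (all others 0) has unique optimal labeling g(u)=g(v)=2, g(w)=g(x)=3 with objective 3, and the labeling h(u)=h(v)=h(w)=1, h(x)=2 with objective 5 is a local optimum with respect to expansion moves: no α-expansion of h strictly decreases the objective. -/
open Finset

variable {V L : Type*}

/-- `g` is an `α`-expansion of `f`: the class of `α` weakly grows and every other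
label class weakly shrinks. -/
def IsExpansion {V L : Type*} (f g : V → L) (α : L) : Prop :=
  (∀ v, f v = α → g v = α) ∧ ∀ v, ∀ i, i ≠ α → g v = i → f v = i

/-!
Vertices `u, v, w, x` are `0, 1, 2, 3 : Fin 4` and labels `1, 2, 3` are `0, 1, 2 : Fin 3`.

A labeling avoiding the costs `100` has `v ∈ {1,2}`, `w ∈ {1,3}`, `x ∈ {2,3}`, so it cuts `vw` or
`wx` and pays at least `3`; paying no more than `3` forces `w = x = 3` and `u = v = 2`, i.e. `g`.
An expansion move of `h` that avoids the costs `100` likewise cuts `vw` or `wx`, and it can relieve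
`u` of its cost `2` only by also cutting `uv`, or by moving `v` together with `u`, which cuts both
`vw` and `wx`. So no expansion move brings the objective below `5`.
-/

theorem cost_le_Q [Fintype V] [DecidableEq L] {E : Finset (V × V)} {c : V → L → ℝ}
    {w : V × V → ℝ} (hc : ∀ u i, 0 ≤ c u i) (hw : ∀ e ∈ E, 0 ≤ w e) (f : V → L) (u : V) :
    c u (f u) ≤ Q E c w f := by
  have hcut : 0 ≤ ∑ e ∈ E.filter (fun e => f e.1 ≠ f e.2), w e :=
    sum_nonneg fun e he => hw e (mem_filter.1 he).1
  have hu : c u (f u) ≤ ∑ v, c v (f v) := single_le_sum (fun v _ => hc v (f v)) (mem_univ u)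
  unfold Q
  linarith

theorem IsExpansion.eq_or_eq {f g : V → L} {α : L} (hfg : IsExpansion f g α) (v : V) :
    g v = α ∨ g v = f v := by
  by_cases hv : g v = α
  · exact .inl hv
  · exact .inr (hfg.2 v (g v) hv rfl).symm

namespace PathCounterexample

def edges : Finset (Fin 4 × Fin 4) := {(0, 1), (1, 2), (2, 3)}

def weight : Fin 4 × Fin 4 → ℝ := fun e =>
  if e = (0, 1) then 4 else if e = (1, 2) then 3 else if e = (2, 3) then 3 else 0

def cost : Fin 4 → Fin 3 → ℝ := fun u i =>
  if u = 0 ∧ i = 0 then 2 else if u = 1 ∧ i = 2 then 100 else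
  if u = 2 ∧ i = 1 then 100 else if u = 3 ∧ i = 0 then 100 else 0

def globalOpt : Fin 4 → Fin 3 := ![1, 1, 2, 2]

def localOpt : Fin 4 → Fin 3 := ![0, 0, 0, 1]

local notation "Q₀" => Q edges cost weight

theorem Q_eq (f : Fin 4 → Fin 3) :
    Q₀ f = cost 0 (f 0) + cost 1 (f 1) + cost 2 (f 2) + cost 3 (f 3) +
      ((if f 0 = f 1 then 0 else 4) + (if f 1 = f 2 then 0 else 3) +
        (if f 2 = f 3 then 0 else 3)) := by
  simp [Q, edges, weight, Fin.sum_univ_four, sum_filter, add_assoc]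

theorem cost_nonneg (u : Fin 4) (i : Fin 3) : 0 ≤ cost u i := by
  unfold cost; split_ifs <;> norm_num

theorem weight_nonneg (e : Fin 4 × Fin 4) : 0 ≤ weight e := by
  unfold weight; split_ifs <;> norm_num

theorem hundred_le_Q (f : Fin 4 → Fin 3) (hf : f 1 = 2 ∨ f 2 = 1 ∨ f 3 = 0) : 100 ≤ Q₀ f := by
  obtain ⟨u, hu⟩ : ∃ u, cost u (f u) = 100 := by
    rcases hf with h | h | h
    exacts [⟨1, by simp [cost, h]⟩, ⟨2, by simp [cost, h]⟩, ⟨3, by simp [cost, h]⟩]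
  exact hu ▸ cost_le_Q cost_nonneg (fun e _ => weight_nonneg e) f u

theorem Q_globalOpt : Q₀ globalOpt = 3 := by
  simp [Q_eq, cost, globalOpt]

theorem Q_localOpt : Q₀ localOpt = 5 := by
  simp [Q_eq, cost, localOpt]; norm_num

theorem Q_globalOpt_lt (f : Fin 4 → Fin 3) (hf : f ≠ globalOpt) : Q₀ globalOpt < Q₀ f := by
  by_contra! hle
  rw [Q_globalOpt] at hle
  have cheap : ¬(f 1 = 2 ∨ f 2 = 1 ∨ f 3 = 0) := fun h => by linarith [hundred_le_Q f h]
  simp only [not_or] at cheap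
  obtain h0 | h0 | h0 : f 0 = 0 ∨ f 0 = 1 ∨ f 0 = 2 := by omega
  all_goals obtain h1 | h1 : f 1 = 0 ∨ f 1 = 1 := by omega
  all_goals obtain h2 | h2 : f 2 = 0 ∨ f 2 = 2 := by omega
  all_goals obtain h3 | h3 : f 3 = 1 ∨ f 3 = 2 := by omega
  all_goals first
    | (rw [Q_eq] at hle; simp [cost, h0, h1, h2, h3] at hle; norm_num at hle; done)
    | exact hf (funext fun i => by fin_cases i <;> simp [globalOpt, *])

theorem Q_localOpt_le_of_isExpansion (α : Fin 3) (f : Fin 4 → Fin 3)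
    (hf : IsExpansion localOpt f α) : Q₀ localOpt ≤ Q₀ f := by
  rw [Q_localOpt, Q_eq]
  obtain h0 | h0 := hf.eq_or_eq 0
  all_goals obtain h1 | h1 := hf.eq_or_eq 1
  all_goals obtain h2 | h2 := hf.eq_or_eq 2
  all_goals obtain h3 | h3 := hf.eq_or_eq 3
  all_goals fin_cases α <;> simp [cost, localOpt, h0, h1, h2, h3] <;> norm_num

end PathCounterexample

open PathCounterexample in
/-- The four-node path counterexample: a `(2,1)`-stable instance where the
labeling `h` (objective `5`) is locally optimal for expansion moves, while the
unique global optimum `g` has objective `3`. -/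
theorem alpha_expansion_counterexample :
    let E : Finset (Fin 4 × Fin 4) := {(0, 1), (1, 2), (2, 3)}
    let w : Fin 4 × Fin 4 → ℝ := fun e =>
      if e = (0, 1) then 4 else if e = (1, 2) then 3 else if e = (2, 3) then 3 else 0
    let c : Fin 4 → Fin 3 → ℝ := fun u i =>
      if u = 0 ∧ i = 0 then 2 else if u = 1 ∧ i = 2 then 100 else
      if u = 2 ∧ i = 1 then 100 else if u = 3 ∧ i = 0 then 100 else 0
    let g : Fin 4 → Fin 3 := ![1, 1, 2, 2]
    let h : Fin 4 → Fin 3 := ![0, 0, 0, 1]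
    (∀ f : Fin 4 → Fin 3, f ≠ g → Q E c w g < Q E c w f) ∧
    Q E c w g = 3 ∧
    Q E c w h = 5 ∧
    (∀ α : Fin 3, ∀ h' : Fin 4 → Fin 3, IsExpansion h h' α → Q E c w h ≤ Q E c w h') :=
  ⟨Q_globalOpt_lt, Q_globalOpt, Q_localOpt, Q_localOpt_le_of_isExpansion⟩
end

section
/- If a Uniform Metric Labeling instance is (1,2,S)-weakly-stable with optimal solution g, and f is any labeling that is locally optimal with respect to expansion moves (no α-expansion of f strictly decreases the objective Q), then f agrees with g on S. -/
/-!
Reweight `w` to `w'`, equal to `w` on the edges cut by `f` and to `2w` on the others; this is a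
`(1,2)`-perturbation. For each label `α`, move to `α` every vertex that `g` labels `α`. Summing
the changes of `Q` over these `|L|` expansion moves, each vertex cost changes in exactly one move,
and each edge contributes at most its change of `w'`-cut weight from `f` to `g`. Hence the total
change is at most `Q'(g) - Q'(f)`, which is negative when `f` differs from `g` on `S`, so some
expansion move strictly improves `f`.
-/

open Finset

variable {V L : Type*}

def expansionToward [DecidableEq L] (f g : V → L) (α : L) : V → L :=
  fun v => if g v = α then α else f v

theorem isExpansion_expansionToward [DecidableEq L] (f g : V → L) (α : L) :
    IsExpansion f (expansionToward f g α) α := by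
  refine ⟨fun v hv => ?_, fun v i hi hv => ?_⟩ <;> by_cases hg : g v = α
  all_goals simp_all [expansionToward]

def cutReweight [DecidableEq L] (f : V → L) (w : V × V → ℝ) : V × V → ℝ :=
  fun e => if f e.1 ≠ f e.2 then w e else 2 * w e

theorem isPerturbation_cutReweight [DecidableEq L] {E : Finset (V × V)} {w : V × V → ℝ}
    (hw : ∀ e ∈ E, 0 ≤ w e) (f : V → L) : IsPerturbation E 1 2 w (cutReweight f w) := by
  intro e he
  have := hw e he
  unfold cutReweight
  split_ifs <;> constructor <;> linarith

theorem Q_eq_sum_add_sum_ite [Fintype V] [DecidableEq L] (E : Finset (V × V)) (c : V → L → ℝ)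
    (w : V × V → ℝ) (g : V → L) :
    Q E c w g = ∑ v, c v (g v) + ∑ e ∈ E, if g e.1 ≠ g e.2 then w e else 0 := by
  rw [Q, sum_filter]

theorem sum_sub_apply_ite_eq [Fintype L] [DecidableEq L] (φ : L → ℝ) (a b : L) :
    ∑ α, (φ (if b = α then α else a) - φ a) = φ b - φ a := by
  rw [Fintype.sum_eq_single b fun α hα => by simp [Ne.symm hα]]
  simp

-- The contribution of an edge with `f`-labels `a, b` and `g`-labels `p, q`.
theorem sum_expansion_edge_le [Fintype L] [DecidableEq L] (a b p q : L) {r : ℝ} (hr : 0 ≤ r) :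
    ∑ α, ((if (if p = α then α else a) ≠ (if q = α then α else b) then r else 0) -
        if a ≠ b then r else 0) ≤
      (if p ≠ q then (if a ≠ b then r else 2 * r) else 0) - if a ≠ b then r else 0 := by
  by_cases hpq : p = q
  · subst hpq
    rw [Fintype.sum_eq_single p fun α hα => by simp [Ne.symm hα]]
    simp
  · rw [Fintype.sum_eq_add p q hpq fun α hα => by simp [Ne.symm hα.1, Ne.symm hα.2]]
    simp only [if_true, hpq, Ne.symm hpq, if_false, ne_eq, not_false_eq_true]
    split_ifs <;> linarith

theorem sum_Q_expansionToward_sub_le [Fintype V] [Fintype L] [DecidableEq L]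
    {E : Finset (V × V)} (c : V → L → ℝ) {w : V × V → ℝ} (hw : ∀ e ∈ E, 0 ≤ w e) (f g : V → L) :
    ∑ α, (Q E c w (expansionToward f g α) - Q E c w f) ≤
      Q E c (cutReweight f w) g - Q E c (cutReweight f w) f := by
  have hvert : ∑ α, (∑ v, c v (expansionToward f g α v) - ∑ v, c v (f v)) =
      ∑ v, c v (g v) - ∑ v, c v (f v) := by
    simp only [← sum_sub_distrib]
    rw [sum_comm]
    exact sum_congr rfl fun v _ => sum_sub_apply_ite_eq (c v) (f v) (g v)
  have hedge : ∑ α, ((∑ e ∈ E, if expansionToward f g α e.1 ≠ expansionToward f g α e.2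
        then w e else 0) - ∑ e ∈ E, if f e.1 ≠ f e.2 then w e else 0) ≤
      (∑ e ∈ E, if g e.1 ≠ g e.2 then cutReweight f w e else 0) -
        ∑ e ∈ E, if f e.1 ≠ f e.2 then cutReweight f w e else 0 := by
    simp only [← sum_sub_distrib]
    rw [sum_comm]
    refine sum_le_sum fun e he => ?_
    have hcut : (if f e.1 ≠ f e.2 then cutReweight f w e else 0) =
        if f e.1 ≠ f e.2 then w e else 0 := by
      simp +contextual [cutReweight]
    rw [hcut]
    exact sum_expansion_edge_le (f e.1) (f e.2) (g e.1) (g e.2) (hw e he)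
  simp only [Q_eq_sum_add_sum_ite, add_sub_add_comm, sum_add_distrib]
  linarith

theorem exists_isExpansion_Q_lt [Fintype V] [Fintype L] [DecidableEq L]
    {E : Finset (V × V)} (c : V → L → ℝ) {w : V × V → ℝ} (hw : ∀ e ∈ E, 0 ≤ w e) {f g : V → L}
    (hlt : Q E c (cutReweight f w) g < Q E c (cutReweight f w) f) :
    ∃ α h, IsExpansion f h α ∧ Q E c w h < Q E c w f := by
  by_contra! hmin
  have hsum : 0 ≤ ∑ α, (Q E c w (expansionToward f g α) - Q E c w f) :=
    sum_nonneg fun α _ => sub_nonneg.2 (hmin α _ (isExpansion_expansionToward f g α))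
  linarith [sum_Q_expansionToward_sub_le c hw f g]

theorem expansion_local_opt_agrees_on_stable_set_general
    [Fintype V] [Fintype L] [DecidableEq L]
    (E : Finset (V × V)) (c : V → L → ℝ) (w : V × V → ℝ)
    (hw : ∀ e ∈ E, 0 ≤ w e)
    (S : Set V) (g : V → L)
    (hstable : IsWeaklyStable E c w 1 2 S g)
    (f : V → L)
    (hlocal : ∀ α : L, ∀ h : V → L, IsExpansion f h α → Q E c w f ≤ Q E c w h) :
    ∀ u ∈ S, f u = g u := by
  intro u hu
  by_contra hne
  obtain ⟨α, h, hexp, hlt⟩ := exists_isExpansion_Q_lt c hw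
    (hstable _ (isPerturbation_cutReweight hw f) f ⟨u, hu, hne⟩)
  exact (hlocal α h hexp).not_gt hlt

/-- On a `(1,2,S)`-weakly-stable instance with optimal solution `g`, any labeling
`f` that is locally optimal with respect to expansion moves agrees with `g` on
the stable set `S`. -/
theorem expansion_local_opt_agrees_on_stable_set
    [Fintype V] [Fintype L] [DecidableEq L] [Nonempty L]
    (E : Finset (V × V)) (c : V → L → ℝ) (w : V × V → ℝ)
    (hc : ∀ u i, 0 ≤ c u i) (hw : ∀ e ∈ E, 0 ≤ w e)
    (S : Set V) (g : V → L)
    (hstable : IsWeaklyStable E c w 1 2 S g)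
    (f : V → L)
    (hlocal : ∀ α : L, ∀ h : V → L, IsExpansion f h α → Q E c w f ≤ Q E c w h) :
    ∀ u ∈ S, f u = g u :=
  expansion_local_opt_agrees_on_stable_set_general E c w hw S g hstable f hlocal
end
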